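/- The simple graph G on vertex set {1,2,3,4,5,6,7} with edge set {{1,2},{1,4},{2,3},{2,4},{2,5},{3,4},{3,6},{3,7},{4,5},{5,6},{5,7},{6,7}} (graph number 990 in the Atlas of Graphs) has minimum rank 3 over the real numbers. -/

import Mathlib

/-!
Lower bound: in any matrix with the zero pattern of the graph, rows {1, 2, 5} and columns
{2, 5, 6} form a lower triangular minor, since {1, 5}, {1, 6}, {2, 6} are non-edges, whose
diagonal entries sit on the edges {1, 2}, {2, 5}, {5, 6}; so the minor is nonsingular.
Upper bound: the Gram matrix of seven suitable vectors in ℝ³ has the required pattern.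
-/

/-- Edge list of graph number 990 in the Atlas of Graphs (vertices 1..7). -/
def atlas990Edges : List (ℕ × ℕ) := [(1,2),(1,4),(2,3),(2,4),(2,5),(3,4),(3,6),(3,7),(4,5),(5,6),(5,7),(6,7)]

namespace Matrix

theorem card_le_rank_of_det_submatrix_ne_zero {K m n ι : Type*} [Field K] [Fintype n]
    [Fintype ι] [DecidableEq ι] (A : Matrix m n K) (r : ι → m) (c : ι → n)
    (h : (A.submatrix r c).det ≠ 0) : Fintype.card ι ≤ A.rank :=
  calc Fintype.card ι = (A.submatrix r c).rank :=
        (rank_of_isUnit _ ((isUnit_iff_isUnit_det _).mpr h.isUnit)).symm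
    _ ≤ A.rank := rank_submatrix_le A r c

end Matrix

open Matrix

/-- Index `i : Fin 7` stands for vertex `i + 1` of the graph. -/
def IsAtlas990Pattern (A : Matrix (Fin 7) (Fin 7) ℝ) : Prop :=
  ∀ i j : Fin 7, i ≠ j →
    (A i j ≠ 0 ↔
      ((i.val + 1, j.val + 1) ∈ atlas990Edges ∨ (j.val + 1, i.val + 1) ∈ atlas990Edges))

theorem IsAtlas990Pattern.three_le_rank {A : Matrix (Fin 7) (Fin 7) ℝ}
    (hA : IsAtlas990Pattern A) : 3 ≤ A.rank := by
  have edge {i j : Fin 7} (hij : i ≠ j) (he : (i.val + 1, j.val + 1) ∈ atlas990Edges) :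
      A i j ≠ 0 :=
    (hA i j hij).mpr (.inl he)
  have nonedge {i j : Fin 7} (hij : i ≠ j)
      (hn : ¬((i.val + 1, j.val + 1) ∈ atlas990Edges ∨ (j.val + 1, i.val + 1) ∈ atlas990Edges)) :
      A i j = 0 :=
    not_not.mp (mt (hA i j hij).mp hn)
  have h04 : A 0 4 = 0 := nonedge (by decide) (by decide)
  have h05 : A 0 5 = 0 := nonedge (by decide) (by decide)
  have h15 : A 1 5 = 0 := nonedge (by decide) (by decide)
  have hdet : (A.submatrix ![0, 1, 4] ![1, 4, 5]).det = A 0 1 * A 1 4 * A 4 5 := by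
    rw [det_fin_three]
    simp [h04, h05, h15]
  have hdiag : A 0 1 * A 1 4 * A 4 5 ≠ 0 :=
    mul_ne_zero (mul_ne_zero (edge (by decide) (by decide)) (edge (by decide) (by decide)))
      (edge (by decide) (by decide))
  simpa using A.card_le_rank_of_det_submatrix_ne_zero ![0, 1, 4] ![1, 4, 5] (hdet ▸ hdiag)

def atlas990Factor : Matrix (Fin 3) (Fin 7) ℝ :=
  !![1, 1, 0, 1, 0, 0, 0;
     0, 1, 1, 1, 1, 0, 0;
     0, 0, 1, 0, -1, 1, 1]

theorem isAtlas990Pattern_transpose_mul_self :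
    IsAtlas990Pattern (atlas990Factorᵀ * atlas990Factor) := by
  intro i j hij
  fin_cases i <;> fin_cases j <;>
    simp_all [atlas990Factor, atlas990Edges, mul_apply, Fin.sum_univ_succ]

theorem rank_transpose_mul_self_atlas990Factor_le :
    (atlas990Factorᵀ * atlas990Factor).rank ≤ 3 := by
  rw [rank_transpose_mul_self]
  simpa using atlas990Factor.rank_le_card_height

/-- Graph number 990 in the Atlas of Graphs has minimum rank 3 over the reals:
3 is the least element of the set of ranks of real symmetric 7×7 matrices whose
off-diagonal zero/nonzero pattern matches the edges of the graph. -/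
theorem atlas990_minRank_eq_three :
    IsLeast {r : ℕ | ∃ A : Matrix (Fin 7) (Fin 7) ℝ, A.IsSymm ∧
        (∀ i j : Fin 7, i ≠ j →
          (A i j ≠ 0 ↔
            ((i.val + 1, j.val + 1) ∈ atlas990Edges ∨
             (j.val + 1, i.val + 1) ∈ atlas990Edges))) ∧
        A.rank = r} 3 := by
  refine ⟨⟨atlas990Factorᵀ * atlas990Factor, transpose_mul _ _,
    isAtlas990Pattern_transpose_mul_self,
    le_antisymm rank_transpose_mul_self_atlas990Factor_le
      isAtlas990Pattern_transpose_mul_self.three_le_rank⟩, ?_⟩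
  rintro r ⟨A, -, hA, rfl⟩
  exact IsAtlas990Pattern.three_le_rank hA
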